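/- Suppose the decreasing rearrangement x^↓ of x ∈ ℝ^n lies in Γ_k^n, with x_1 ≥ ... ≥ x_n. Then there exists a constant C depending only on n and k such that x_k ≤ C·(s_k(x)^{1/k} + |x_n|). -/

import Mathlib

open Finset

/-! Take `C = 2N` with `N = binom(n, k)`, and write `a = x_k`, `M = |x_n|`; if `a ≤ 2NM` there is
nothing to prove. Otherwise `a > 0`, the top `k` coordinates are `≥ a`, and every other coordinate
has modulus `≤ a`. Comparing a `k`-subset `A` with the top set `T` coordinate by coordinate, a
product over `A` containing a negative coordinate (of modulus `≤ M`) is at most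
`(M / a) ∏_T x < (∏_T x) / (2N)` in modulus. Hence the term `∏_T x ≥ a ^ k` dominates the `N`
terms of `s_k(x)`, giving `a ^ k ≤ 2 s_k(x)` and so `a ≤ 2 s_k(x) ^ (1/k)`. -/

/-- The `k`-th elementary symmetric polynomial of `x ∈ ℝⁿ`. -/
noncomputable def esymm (n k : ℕ) (x : Fin n → ℝ) : ℝ :=
  ∑ A ∈ Finset.powersetCard k (Finset.univ : Finset (Fin n)), ∏ i ∈ A, x i

/-- The Gårding cone `Γₖⁿ = {x : sₗ(x) > 0, l = 1,…,k}`. -/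
def GammaK (n k : ℕ) (x : Fin n → ℝ) : Prop :=
  ∀ l, 1 ≤ l → l ≤ k → 0 < esymm n l x

section ProductComparison

variable {ι : Type*} [DecidableEq ι] {x : ι → ℝ} {A T : Finset ι} {a b : ℝ}

theorem mul_abs_prod_le_mul_prod (hcard : #A = #T) (hT : ∀ i ∈ T, a ≤ x i)
    (hA : ∀ i ∈ A \ T, |x i| ≤ a) {i₀ : ι} (hi₀ : i₀ ∈ A \ T) (hb : |x i₀| ≤ b) :
    a * |∏ i ∈ A, x i| ≤ b * ∏ i ∈ T, x i := by
  have ha : 0 ≤ a := (abs_nonneg _).trans (hA i₀ hi₀)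
  have hb0 : 0 ≤ b := (abs_nonneg _).trans hb
  have hT0 : ∀ i ∈ T, 0 ≤ x i := fun i hi => ha.trans (hT i hi)
  have hout : a * ∏ i ∈ A \ T, |x i| ≤ b * a ^ #(A \ T) := by
    rw [← mul_prod_erase _ _ hi₀, ← card_erase_add_one hi₀, pow_succ]
    calc a * (|x i₀| * ∏ i ∈ (A \ T).erase i₀, |x i|)
        ≤ a * (b * a ^ #((A \ T).erase i₀)) := by
          gcongr
          exact (prod_le_prod (fun _ _ => abs_nonneg _) fun i hi => hA i (mem_of_mem_erase hi)).trans_eq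
            (prod_const a)
      _ = b * (a ^ #((A \ T).erase i₀) * a) := by ring
  have hin : a ^ #(A \ T) ≤ ∏ i ∈ T \ A, x i := by
    rw [card_sdiff_comm hcard]
    exact (prod_const a).symm.trans_le (prod_le_prod (fun _ _ => ha) fun i hi => hT i (mem_sdiff.1 hi).1)
  have hcommon : |∏ i ∈ A ∩ T, x i| = ∏ i ∈ T ∩ A, x i := by
    rw [inter_comm, abs_of_nonneg (prod_nonneg fun i hi => hT0 i (mem_inter.1 hi).1)]
  calc a * |∏ i ∈ A, x i| = (∏ i ∈ T ∩ A, x i) * (a * ∏ i ∈ A \ T, |x i|) := by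
        rw [← prod_inter_mul_prod_sdiff A T, abs_mul, hcommon, abs_prod]; ring
    _ ≤ (∏ i ∈ T ∩ A, x i) * (b * ∏ i ∈ T \ A, x i) := by
        have hcommon0 : 0 ≤ ∏ i ∈ T ∩ A, x i := hcommon ▸ abs_nonneg _
        exact mul_le_mul_of_nonneg_left (hout.trans (by gcongr)) hcommon0
    _ = b * ∏ i ∈ T, x i := by rw [← prod_inter_mul_prod_sdiff T A]; ring

end ProductComparison

theorem le_two_mul_sum_of_neg_le {α : Type*} {S : Finset α} {f : α → ℝ} {T : α} (hT : T ∈ S)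
    (hf : ∀ A ∈ S, -f T ≤ 2 * #S * f A) : f T ≤ 2 * ∑ A ∈ S, f A := by
  have hN : (1 : ℝ) ≤ #S := by exact_mod_cast card_pos.2 ⟨T, hT⟩
  have hfT : 0 ≤ f T := by nlinarith [hf T hT]
  have hsum : 2 * #S * f T + f T ≤ ∑ A ∈ S, (2 * #S * f A + f T) :=
    single_le_sum (f := fun A => 2 * #S * f A + f T) (fun A hA => by linarith [hf A hA]) hT
  rw [sum_add_distrib, ← mul_sum, sum_const, nsmul_eq_mul] at hsum
  nlinarith

theorem neg_prod_Iic_le_mul_prod {ι : Type*} [LinearOrder ι] [LocallyFiniteOrderBot ι]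
    {x : ι → ℝ} (hx : Antitone x) {K : ι} {M c : ℝ} (hM : ∀ i, -M ≤ x i) (hc : 1 ≤ c)
    (h : c * M < x K) {A : Finset ι} (hA : #A = #(Iic K)) :
    -∏ i ∈ Iic K, x i ≤ c * ∏ i ∈ A, x i := by
  set a := x K
  have ha : 0 < a := by nlinarith [hM K]
  have hT : ∀ i ∈ Iic K, a ≤ x i := fun i hi => hx (mem_Iic.1 hi)
  have hP0 : 0 ≤ ∏ i ∈ Iic K, x i := prod_nonneg fun i hi => ha.le.trans (hT i hi)
  by_cases hneg : ∃ i ∈ A, x i < 0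
  · obtain ⟨i₀, hi₀A, hi₀⟩ := hneg
    have hi₀T : i₀ ∉ Iic K := fun hi => by linarith [hT i₀ hi]
    have hsmall : ∀ i ∈ A \ Iic K, |x i| ≤ a := fun i hi =>
      abs_le.2 ⟨by nlinarith [hM i, hM K],
        hx (le_of_lt (not_le.1 (mt mem_Iic.2 (mem_sdiff.1 hi).2)))⟩
    have hcomp := mul_abs_prod_le_mul_prod hA hT hsmall (mem_sdiff.2 ⟨hi₀A, hi₀T⟩)
      (show |x i₀| ≤ M by rw [abs_of_neg hi₀]; linarith [hM i₀])
    have hbound : c * |∏ i ∈ A, x i| ≤ ∏ i ∈ Iic K, x i := by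
      refine le_of_mul_le_mul_left ?_ ha
      calc a * (c * |∏ i ∈ A, x i|) = c * (a * |∏ i ∈ A, x i|) := by ring
        _ ≤ c * (M * ∏ i ∈ Iic K, x i) := by gcongr
        _ = (c * M) * ∏ i ∈ Iic K, x i := by ring
        _ ≤ a * ∏ i ∈ Iic K, x i := by gcongr
    nlinarith [neg_abs_le (∏ i ∈ A, x i)]
  · push Not at hneg
    nlinarith [prod_nonneg hneg]

theorem pow_le_two_mul_esymm {n k : ℕ} {x : Fin n → ℝ} (hx : Antitone x) {K : Fin n}
    (hK : (K : ℕ) + 1 = k) {M : ℝ} (hM : ∀ i, -M ≤ x i) (h : 2 * n.choose k * M < x K) :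
    x K ^ k ≤ 2 * esymm n k x := by
  have hN : (1 : ℝ) ≤ n.choose k := Nat.one_le_cast.2 (Nat.choose_pos (by omega))
  have hcardT : #(Iic K) = k := by rw [Fin.card_Iic, hK]
  have hTmem : Iic K ∈ powersetCard k (univ : Finset (Fin n)) :=
    mem_powersetCard.2 ⟨subset_univ _, hcardT⟩
  have hcard : (#(powersetCard k (univ : Finset (Fin n))) : ℝ) = n.choose k := by
    rw [card_powersetCard, card_univ, Fintype.card_fin]
  have hterm : ∀ A ∈ powersetCard k (univ : Finset (Fin n)),
      -∏ i ∈ Iic K, x i ≤ 2 * #(powersetCard k (univ : Finset (Fin n))) * ∏ i ∈ A, x i :=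
    fun A hA => hcard ▸ neg_prod_Iic_le_mul_prod hx hM (by linarith) h
      ((mem_powersetCard.1 hA).2.trans hcardT.symm)
  calc x K ^ k = ∏ _i ∈ Iic K, x K := by rw [prod_const, hcardT]
    _ ≤ ∏ i ∈ Iic K, x i :=
        prod_le_prod (fun _ _ => by nlinarith [hM K]) fun i hi => hx (mem_Iic.1 hi)
    _ ≤ 2 * esymm n k x := le_two_mul_sum_of_neg_le (f := fun A => ∏ i ∈ A, x i) hTmem hterm

theorem le_two_mul_rpow_of_pow_le {a s : ℝ} {k : ℕ} (hs : 0 ≤ s) (hk : 1 ≤ k)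
    (h : a ^ k ≤ 2 * s) : a ≤ 2 * s ^ ((1 : ℝ) / k) := by
  rcases le_or_gt a 0 with ha | ha
  · exact ha.trans (by positivity)
  have hk' : (0 : ℝ) < k := by exact_mod_cast hk
  calc a ≤ (2 * s) ^ ((1 : ℝ) / k) := by
        rw [one_div, Real.le_rpow_inv_iff_of_pos ha.le (by positivity) hk', Real.rpow_natCast]
        exact h
    _ = 2 ^ ((1 : ℝ) / k) * s ^ ((1 : ℝ) / k) := Real.mul_rpow zero_le_two hs
    _ ≤ 2 ^ (1 : ℝ) * s ^ ((1 : ℝ) / k) := by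
        gcongr
        · exact one_le_two
        · rw [div_le_one hk']; exact_mod_cast hk
    _ = 2 * s ^ ((1 : ℝ) / k) := by rw [Real.rpow_one]

/-- For decreasing x with x ∈ Γₖⁿ : x_k ≤ C·(s_k(x)^{1/k} + |x_n|). -/
theorem xk_upper_bound (n k : ℕ) (hn : 0 < n) (hk : 1 ≤ k) (hkn : k ≤ n) :
    ∃ C : ℝ, 0 < C ∧ ∀ x : Fin n → ℝ, Antitone x → GammaK n k x →
      x ⟨k - 1, by omega⟩ ≤
        C * ((esymm n k x) ^ ((1 : ℝ) / (k : ℝ)) + |x ⟨n - 1, by omega⟩|) := by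
  have hN : (1 : ℝ) ≤ n.choose k := by exact_mod_cast Nat.choose_pos hkn
  refine ⟨2 * n.choose k, by positivity, fun x hx hΓ => ?_⟩
  have hσ : 0 ≤ esymm n k x := (hΓ k hk le_rfl).le
  have hroot : 0 ≤ esymm n k x ^ ((1 : ℝ) / k) := by positivity
  have hM : ∀ i, -|x ⟨n - 1, by omega⟩| ≤ x i := fun i =>
    (neg_abs_le _).trans (hx (Fin.le_def.2 (by simp only; omega)))
  rcases le_or_gt (x ⟨k - 1, by omega⟩) (2 * n.choose k * |x ⟨n - 1, by omega⟩|) with h | h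
  · exact h.trans (by nlinarith)
  · have := le_two_mul_rpow_of_pow_le hσ hk (pow_le_two_mul_esymm hx (by simp only; omega) hM h)
    nlinarith [abs_nonneg (x ⟨n - 1, by omega⟩)]
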